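/- arXiv:2302.06097 — 6 statements merged into one kernel-verified Lean document; each statement's English description precedes it below -/
import Mathlib

section
/- Let x, y ≥ 0 be real numbers, let k ≥ 1 be a positive integer and let q be a real number with 0 ≤ q ≤ 1. Then (x+y)^{k+q} ≤ x^{k+q} + y^{k+q} + (2^k − 1)·(x^k·y^q + x^q·y^k), where all powers are real powers. -/
open Real

/-- Two-variable rearrangement: for positive `x, y` and nonneg exponents `s, t`,
`x^s y^t + x^t y^s ≤ x^{s+t} + y^{s+t}`. -/
private lemma aux_rearr {x y s t : ℝ} (hx : 0 < x) (hy : 0 < y)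
    (hs : 0 ≤ s) (ht : 0 ≤ t) :
    x ^ s * y ^ t + x ^ t * y ^ s ≤ x ^ (s + t) + y ^ (s + t) := by
  have h1 : x ^ (s + t) = x ^ s * x ^ t := Real.rpow_add hx s t
  have h2 : y ^ (s + t) = y ^ s * y ^ t := Real.rpow_add hy s t
  have key : 0 ≤ (x ^ s - y ^ s) * (x ^ t - y ^ t) := by
    rcases le_total x y with h | h
    · have a1 : x ^ s ≤ y ^ s := Real.rpow_le_rpow hx.le h hs
      have a2 : x ^ t ≤ y ^ t := Real.rpow_le_rpow hx.le h ht
      nlinarith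
    · have a1 : y ^ s ≤ x ^ s := Real.rpow_le_rpow hy.le h hs
      have a2 : y ^ t ≤ x ^ t := Real.rpow_le_rpow hy.le h ht
      nlinarith
  nlinarith

/-- Two-variable Muirhead: spreading exponents increases the symmetric sum. -/
private lemma aux_muirhead {x y a b d : ℝ} (hx : 0 < x) (hy : 0 < y)
    (hd : 0 ≤ d) (hda : d ≤ a) (hdb : d ≤ b) :
    x ^ a * y ^ b + x ^ b * y ^ a ≤
      x ^ (a + b - d) * y ^ d + x ^ d * y ^ (a + b - d) := by
  have hs : 0 ≤ a - d := by linarith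
  have ht : 0 ≤ b - d := by linarith
  have h := aux_rearr hx hy hs ht
  have e1 : x ^ a = x ^ d * x ^ (a - d) := by
    rw [← Real.rpow_add hx]; ring_nf
  have e2 : x ^ b = x ^ d * x ^ (b - d) := by
    rw [← Real.rpow_add hx]; ring_nf
  have e3 : y ^ a = y ^ d * y ^ (a - d) := by
    rw [← Real.rpow_add hy]; ring_nf
  have e4 : y ^ b = y ^ d * y ^ (b - d) := by
    rw [← Real.rpow_add hy]; ring_nf
  have e5 : x ^ (a + b - d) = x ^ d * x ^ (a - d + (b - d)) := by
    rw [← Real.rpow_add hx]; ring_nf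
  have e6 : y ^ (a + b - d) = y ^ d * y ^ (a - d + (b - d)) := by
    rw [← Real.rpow_add hy]; ring_nf
  have hxd : 0 < x ^ d := Real.rpow_pos_of_pos hx d
  have hyd : 0 < y ^ d := Real.rpow_pos_of_pos hy d
  calc x ^ a * y ^ b + x ^ b * y ^ a
      = x ^ d * y ^ d * (x ^ (a - d) * y ^ (b - d) + x ^ (b - d) * y ^ (a - d)) := by
        rw [e1, e2, e3, e4]; ring
    _ ≤ x ^ d * y ^ d * (x ^ (a - d + (b - d)) + y ^ (a - d + (b - d))) := by
        apply mul_le_mul_of_nonneg_left h (by positivity)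
    _ = x ^ (a + b - d) * y ^ d + x ^ d * y ^ (a + b - d) := by
        rw [e5, e6]; ring

/-- Subadditivity of `rpow` with exponent `≤ 1`, positive case. -/
private lemma aux_subadd {x y q : ℝ} (hx : 0 < x) (hy : 0 < y) (hq1 : q ≤ 1) :
    (x + y) ^ q ≤ x ^ q + y ^ q := by
  have hxy : 0 < x + y := by linarith
  have e : (x + y) ^ q = x * (x + y) ^ (q - 1) + y * (x + y) ^ (q - 1) := by
    rw [← add_mul]
    rw [show q = 1 + (q - 1) by ring, Real.rpow_add hxy, Real.rpow_one]
    ring_nf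
  rw [e]
  have h1 : (x + y) ^ (q - 1) ≤ x ^ (q - 1) :=
    Real.rpow_le_rpow_of_nonpos hx (by linarith) (by linarith)
  have h2 : (x + y) ^ (q - 1) ≤ y ^ (q - 1) :=
    Real.rpow_le_rpow_of_nonpos hy (by linarith) (by linarith)
  have ex : x * x ^ (q - 1) = x ^ q := by
    nth_rewrite 1 [← Real.rpow_one x]
    rw [← Real.rpow_add hx]; ring_nf
  have ey : y * y ^ (q - 1) = y ^ q := by
    nth_rewrite 1 [← Real.rpow_one y]
    rw [← Real.rpow_add hy]; ring_nf
  calc x * (x + y) ^ (q - 1) + y * (x + y) ^ (q - 1)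
      ≤ x * x ^ (q - 1) + y * y ^ (q - 1) := by
        gcongr
    _ = x ^ q + y ^ q := by rw [ex, ey]

/-- Main inequality in the positive case. -/
private lemma aux_main {x y : ℝ} (hx : 0 < x) (hy : 0 < y) (k : ℕ) (hk : 1 ≤ k)
    {q : ℝ} (hq0 : 0 ≤ q) (hq1 : q ≤ 1) :
    (x + y) ^ ((k : ℝ) + q) ≤
      x ^ ((k : ℝ) + q) + y ^ ((k : ℝ) + q) +
        ((2 : ℝ) ^ k - 1) * (x ^ (k : ℝ) * y ^ q + x ^ q * y ^ (k : ℝ)) := by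
  have hxy : 0 < x + y := by linarith
  induction k, hk using Nat.le_induction with
  | base =>
      push_cast
      have e : (x + y) ^ ((1 : ℝ) + q) = (x + y) * (x + y) ^ q := by
        rw [Real.rpow_add hxy, Real.rpow_one]
      have ex : x * x ^ q = x ^ ((1:ℝ) + q) := by
        rw [Real.rpow_add hx, Real.rpow_one]
      have ey : y * y ^ q = y ^ ((1:ℝ) + q) := by
        rw [Real.rpow_add hy, Real.rpow_one]
      have hx1 : x ^ (1:ℝ) = x := Real.rpow_one x
      have hy1 : y ^ (1:ℝ) = y := Real.rpow_one y
      calc (x + y) ^ ((1 : ℝ) + q)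
          = (x + y) * (x + y) ^ q := e
        _ ≤ (x + y) * (x ^ q + y ^ q) := by
            apply mul_le_mul_of_nonneg_left (aux_subadd hx hy hq1) hxy.le
        _ = x ^ ((1:ℝ) + q) + y ^ ((1:ℝ) + q) +
              ((2:ℝ)^1 - 1) * (x ^ (1:ℝ) * y ^ q + x ^ q * y ^ (1:ℝ)) := by
            rw [← ex, ← ey, hx1, hy1]; ring
  | succ k hk ih =>
      have hK1 : (1:ℝ) ≤ (k:ℝ) := by exact_mod_cast hk
      push_cast
      set K : ℝ := (k : ℝ) with hKdef
      -- rewrite (x+y)^(K+1+q) = (x+y) * (x+y)^(K+q)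
      have e : (x + y) ^ (K + 1 + q) = (x + y) * (x + y) ^ (K + q) := by
        rw [show K + 1 + q = 1 + (K + q) by ring, Real.rpow_add hxy, Real.rpow_one]
      have exq : ∀ z : ℝ, 0 < z → ∀ a : ℝ, z * z ^ a = z ^ (1 + a) := by
        intro z hz a
        rw [Real.rpow_add hz, Real.rpow_one]
      -- Muirhead pieces with target exponents (K+1, q)
      have hM1 : x ^ (1:ℝ) * y ^ (K + q) + x ^ (K + q) * y ^ (1:ℝ) ≤
          x ^ (K + 1) * y ^ q + x ^ q * y ^ (K + 1) := by
        have := aux_muirhead hx hy hq0 (a := 1) (b := K + q) hq1 (by linarith)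
        have h' : (1:ℝ) + (K + q) - q = K + 1 := by ring
        rwa [h'] at this
      have hM2 : x ^ (q+1) * y ^ K + x ^ K * y ^ (q+1) ≤
          x ^ (K + 1) * y ^ q + x ^ q * y ^ (K + 1) := by
        have := aux_muirhead hx hy hq0 (a := q + 1) (b := K) (by linarith) (by linarith)
        have h' : q + 1 + K - q = K + 1 := by ring
        rwa [h'] at this
      have hxKq : 0 ≤ x ^ (K+q) := (Real.rpow_pos_of_pos hx _).le
      have hyKq : 0 ≤ y ^ (K+q) := (Real.rpow_pos_of_pos hy _).le
      have h2k : (1:ℝ) ≤ (2:ℝ)^k := one_le_pow₀ (by norm_num)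
      -- expansion identities
      have ex1 : x * x ^ (K + q) = x ^ (K + 1 + q) := by
        rw [exq x hx]; ring_nf
      have ey1 : y * y ^ (K + q) = y ^ (K + 1 + q) := by
        rw [exq y hy]; ring_nf
      have ex2 : x * x ^ K = x ^ (K + 1) := by rw [exq x hx]; ring_nf
      have ey2 : y * y ^ K = y ^ (K + 1) := by rw [exq y hy]; ring_nf
      have ex3 : x * x ^ q = x ^ (q + 1) := by rw [exq x hx]; ring_nf
      have ey3 : y * y ^ q = y ^ (q + 1) := by rw [exq y hy]; ring_nf
      have hx1 : x ^ (1:ℝ) = x := Real.rpow_one x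
      have hy1 : y ^ (1:ℝ) = y := Real.rpow_one y
      rw [hx1, hy1] at hM1
      calc (x + y) ^ (K + 1 + q)
          = (x + y) * (x + y) ^ (K + q) := e
        _ ≤ (x + y) * (x ^ (K + q) + y ^ (K + q) +
              ((2:ℝ)^k - 1) * (x ^ K * y ^ q + x ^ q * y ^ K)) := by
            apply mul_le_mul_of_nonneg_left ih hxy.le
        _ = x ^ (K + 1 + q) + y ^ (K + 1 + q) +
              (x * y ^ (K + q) + x ^ (K + q) * y) +
              ((2:ℝ)^k - 1) * ((x ^ (K+1) * y ^ q + x ^ q * y ^ (K+1)) +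
                (x ^ (q+1) * y ^ K + x ^ K * y ^ (q+1))) := by
            rw [← ex1, ← ey1, ← ex2, ← ey2, ← ex3, ← ey3]; ring
        _ ≤ x ^ (K + 1 + q) + y ^ (K + 1 + q) +
              ((2:ℝ)^(k+1) - 1) * (x ^ (K + 1) * y ^ q + x ^ q * y ^ (K + 1)) := by
            have hM2' := mul_le_mul_of_nonneg_left hM2 (by linarith : (0:ℝ) ≤ (2:ℝ)^k - 1)
            rw [pow_succ]
            nlinarith [hM1, hM2']

/-- Converse of the superadditivity inequality: for `x, y ≥ 0`, an integer `k ≥ 1`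
and `0 ≤ q ≤ 1`, one has
`(x+y)^{k+q} ≤ x^{k+q} + y^{k+q} + (2^k − 1)(x^k y^q + x^q y^k)`
(real powers). -/
theorem converse_superadditivity
    (x y : ℝ) (hx : 0 ≤ x) (hy : 0 ≤ y) (k : ℕ) (hk : 1 ≤ k)
    (q : ℝ) (hq0 : 0 ≤ q) (hq1 : q ≤ 1) :
    (x + y) ^ ((k : ℝ) + q) ≤
      x ^ ((k : ℝ) + q) + y ^ ((k : ℝ) + q) +
        ((2 : ℝ) ^ k - 1) * (x ^ (k : ℝ) * y ^ q + x ^ q * y ^ (k : ℝ)) := by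
  have hK1 : (1:ℝ) ≤ (k:ℝ) := by exact_mod_cast hk
  have hKq : (0:ℝ) < (k:ℝ) + q := by linarith
  have h2k : (1:ℝ) ≤ (2:ℝ)^k := one_le_pow₀ (by norm_num)
  rcases hx.eq_or_lt with rfl | hx'
  · rw [zero_add, Real.zero_rpow hKq.ne', Real.zero_rpow (by linarith : ((k:ℝ)) ≠ 0)]
    have h1 : 0 ≤ (0:ℝ) ^ q := Real.rpow_nonneg le_rfl q
    have h2 : 0 ≤ y ^ (k:ℝ) := Real.rpow_nonneg hy _
    have h3 : 0 ≤ y ^ q := Real.rpow_nonneg hy q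
    nlinarith [mul_nonneg h1 h2, mul_nonneg (mul_nonneg (by linarith : (0:ℝ) ≤ 2^k-1) h1) h2]
  rcases hy.eq_or_lt with rfl | hy'
  · rw [add_zero, Real.zero_rpow hKq.ne', Real.zero_rpow (by linarith : ((k:ℝ)) ≠ 0)]
    have h1 : 0 ≤ (0:ℝ) ^ q := Real.rpow_nonneg le_rfl q
    have h2 : 0 ≤ x ^ (k:ℝ) := Real.rpow_nonneg hx _
    have h3 : 0 ≤ x ^ q := Real.rpow_nonneg hx q
    nlinarith [mul_nonneg h2 h1, mul_nonneg (mul_nonneg (by linarith : (0:ℝ) ≤ 2^k-1) h2) h1]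
  exact aux_main hx' hy' k hk hq0 hq1
end

section
/- Let x, y ≥ 0 be real numbers and let p, q > 0 be real numbers with 1/2 ≤ p + q ≤ 1. Then (x+y)^{p+q} ≥ x^{p+q} + y^{p+q} − 2·(x^p·y^q + x^q·y^p), where all powers are real powers. -/
/-- Converse of the subadditivity inequality: for `x, y ≥ 0` and `p, q > 0` with
`1/2 ≤ p + q ≤ 1`, one has
`(x+y)^{p+q} ≥ x^{p+q} + y^{p+q} − 2(x^p y^q + x^q y^p)` (real powers). -/
theorem converse_subadditivity
    (x y : ℝ) (hx : 0 ≤ x) (hy : 0 ≤ y) (p q : ℝ) (hp : 0 < p) (hq : 0 < q)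
    (hpq1 : 1 / 2 ≤ p + q) (hpq2 : p + q ≤ 1) :
    (x + y) ^ (p + q) ≥ x ^ (p + q) + y ^ (p + q) - 2 * (x ^ p * y ^ q + x ^ q * y ^ p) := by
  have hs : p + q ≠ 0 := by positivity
  have hnn1 : (0:ℝ) ≤ x ^ p * y ^ q := by positivity
  have hnn2 : (0:ℝ) ≤ x ^ q * y ^ p := by positivity
  rcases le_total x y with h | h
  · have h1 : y ^ (p + q) ≤ (x + y) ^ (p + q) :=
      Real.rpow_le_rpow hy (by linarith) (by positivity)
    have h2 : x ^ (p + q) = x ^ p * x ^ q := Real.rpow_add' hx hs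
    have h3 : x ^ q ≤ y ^ q := Real.rpow_le_rpow hx h hq.le
    have h4 : x ^ p * x ^ q ≤ x ^ p * y ^ q :=
      mul_le_mul_of_nonneg_left h3 (by positivity)
    linarith
  · have h1 : x ^ (p + q) ≤ (x + y) ^ (p + q) :=
      Real.rpow_le_rpow hx (by linarith) (by positivity)
    have h2 : y ^ (p + q) = y ^ p * y ^ q := Real.rpow_add' hy hs
    have h3 : y ^ p ≤ x ^ p := Real.rpow_le_rpow hy h hp.le
    have h4 : y ^ p * y ^ q ≤ x ^ p * y ^ q :=
      mul_le_mul_of_nonneg_right h3 (by positivity)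
    nlinarith
end

section
/- Let 0 ≤ p₁ ≤ q₁ and 0 ≤ p₂ ≤ q₂ be real numbers with p₁ + q₁ = p₂ + q₂. Then the inequality x^{p₁}·y^{q₁} + x^{q₁}·y^{p₁} ≥ x^{p₂}·y^{q₂} + x^{q₂}·y^{p₂} holds for all real numbers x, y ≥ 0 if and only if q₁ − p₁ ≥ q₂ − p₂. -/
/-- Two-variable Muirhead inequality with real exponents: for `0 ≤ p₁ ≤ q₁`,
`0 ≤ p₂ ≤ q₂` with `p₁ + q₁ = p₂ + q₂`, the inequality
`x^{p₁} y^{q₁} + x^{q₁} y^{p₁} ≥ x^{p₂} y^{q₂} + x^{q₂} y^{p₂}` holds for all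
`x, y ≥ 0` iff `q₁ − p₁ ≥ q₂ − p₂`. -/
theorem muirhead_two_variable
    (p₁ q₁ p₂ q₂ : ℝ) (hp₁ : 0 ≤ p₁) (hpq₁ : p₁ ≤ q₁) (hp₂ : 0 ≤ p₂) (hpq₂ : p₂ ≤ q₂)
    (hsum : p₁ + q₁ = p₂ + q₂) :
    (∀ x y : ℝ, 0 ≤ x → 0 ≤ y →
        x ^ p₂ * y ^ q₂ + x ^ q₂ * y ^ p₂ ≤ x ^ p₁ * y ^ q₁ + x ^ q₁ * y ^ p₁) ↔
      q₂ - p₂ ≤ q₁ - p₁ := by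
  constructor
  · intro h
    by_contra hlt
    push_neg at hlt
    have hq : q₁ < q₂ := by linarith
    have hp : p₂ < p₁ := by linarith
    have this2 := h 2 1 (by norm_num) (by norm_num)
    simp only [Real.one_rpow, mul_one] at this2
    set d := q₂ - q₁ with hd_def
    have hd : 0 < d := by simp [hd_def]; linarith
    have e1 : (2:ℝ) ^ q₂ = 2 ^ q₁ * 2 ^ d := by
      rw [← Real.rpow_add (by norm_num : (0:ℝ) < 2)]
      congr 1; ring
    have e2 : (2:ℝ) ^ p₁ = 2 ^ p₂ * 2 ^ d := by
      rw [← Real.rpow_add (by norm_num : (0:ℝ) < 2)]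
      congr 1; simp [hd_def]; linarith
    have h2d : 1 < (2:ℝ) ^ d := by
      have : (2:ℝ) ^ (0:ℝ) < 2 ^ d :=
        (Real.rpow_lt_rpow_left_iff (by norm_num : (1:ℝ) < 2)).mpr hd
      simpa using this
    have hq2p : (2:ℝ) ^ p₂ < 2 ^ q₁ :=
      (Real.rpow_lt_rpow_left_iff (by norm_num : (1:ℝ) < 2)).mpr (by linarith)
    rw [e1, e2] at this2
    nlinarith [hq2p, h2d]
  · intro hq x y hx0 hy0
    have hqq : q₂ ≤ q₁ := by linarith
    have hpp : p₁ ≤ p₂ := by linarith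
    rcases eq_or_lt_of_le hx0 with hx | hx
    · -- x = 0
      rcases eq_or_lt_of_le hp₂ with hp2 | hp2
      · -- p₂ = 0, hence p₁ = 0 and q₁ = q₂
        have hp1 : p₁ = 0 := le_antisymm (by linarith) hp₁
        have hqe : q₁ = q₂ := by linarith
        rw [← hp2, hp1, hqe]
      · have hq2 : 0 < q₂ := lt_of_lt_of_le hp2 hpq₂
        rw [← hx, Real.zero_rpow (ne_of_gt hp2), Real.zero_rpow (ne_of_gt hq2)]
        simp only [zero_mul, add_zero, zero_add]
        positivity
    rcases eq_or_lt_of_le hy0 with hy | hy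
    · -- y = 0
      rcases eq_or_lt_of_le hp₂ with hp2 | hp2
      · have hp1 : p₁ = 0 := le_antisymm (by linarith) hp₁
        have hqe : q₁ = q₂ := by linarith
        rw [← hp2, hp1, hqe]
      · have hq2 : 0 < q₂ := lt_of_lt_of_le hp2 hpq₂
        rw [← hy, Real.zero_rpow (ne_of_gt hp2), Real.zero_rpow (ne_of_gt hq2)]
        simp only [mul_zero, add_zero, zero_add]
        positivity
    -- main case: 0 < x, 0 < y
    set c := p₂ - p₁ with hc_def
    set e := q₂ - p₂ with he_def
    have hc : 0 ≤ c := by simp [hc_def]; linarith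
    have he : 0 ≤ e := by simp [he_def]; linarith
    -- key inequality
    have key : 0 ≤ (x ^ e * x ^ c - y ^ e * y ^ c) * (x ^ c - y ^ c) := by
      have hec : x ^ e * x ^ c = x ^ (e + c) := (Real.rpow_add hx e c).symm
      have hec' : y ^ e * y ^ c = y ^ (e + c) := (Real.rpow_add hy e c).symm
      rw [hec, hec']
      rcases le_total x y with hxy | hxy
      · have h1 : x ^ (e + c) ≤ y ^ (e + c) :=
          Real.rpow_le_rpow hx.le hxy (by linarith)
        have h2 : x ^ c ≤ y ^ c := Real.rpow_le_rpow hx.le hxy hc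
        nlinarith
      · have h1 : y ^ (e + c) ≤ x ^ (e + c) :=
          Real.rpow_le_rpow hy.le hxy (by linarith)
        have h2 : y ^ c ≤ x ^ c := Real.rpow_le_rpow hy.le hxy hc
        nlinarith
    have hxp : 0 < x ^ p₁ := Real.rpow_pos_of_pos hx p₁
    have hyp : 0 < y ^ p₁ := Real.rpow_pos_of_pos hy p₁
    have ex1 : x ^ p₂ = x ^ p₁ * x ^ c := by
      rw [← Real.rpow_add hx]; congr 1; simp [hc_def]
    have ey1 : y ^ p₂ = y ^ p₁ * y ^ c := by
      rw [← Real.rpow_add hy]; congr 1; simp [hc_def]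
    have ex2 : x ^ q₂ = x ^ p₁ * x ^ c * x ^ e := by
      rw [← Real.rpow_add hx, ← Real.rpow_add hx]; congr 1; simp [hc_def, he_def]
    have ey2 : y ^ q₂ = y ^ p₁ * y ^ c * y ^ e := by
      rw [← Real.rpow_add hy, ← Real.rpow_add hy]; congr 1; simp [hc_def, he_def]
    have ex3 : x ^ q₁ = x ^ p₁ * x ^ c * x ^ c * x ^ e := by
      rw [← Real.rpow_add hx, ← Real.rpow_add hx, ← Real.rpow_add hx]
      congr 1; simp [hc_def, he_def]; linarith
    have ey3 : y ^ q₁ = y ^ p₁ * y ^ c * y ^ c * y ^ e := by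
      rw [← Real.rpow_add hy, ← Real.rpow_add hy, ← Real.rpow_add hy]
      congr 1; simp [hc_def, he_def]; linarith
    rw [ex1, ey1, ex2, ey2, ex3, ey3]
    nlinarith [mul_nonneg (mul_nonneg hxp.le hyp.le) key]
end

section
/- Let x, y ≥ 0 be real numbers and let p be a real number with 1/4 ≤ p ≤ 1/2. Then x^{2p} + y^{2p} ≤ (x+y)^{2p} + √2·x^p·y^p, where all powers are real powers. -/
lemma sqrt_add_le_aux (a b : ℝ) (ha : 0 ≤ a) (hb : 0 ≤ b) :
    Real.sqrt (a + b) ≤ Real.sqrt a + Real.sqrt b := by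
  rw [show a + b = Real.sqrt a ^ 2 + Real.sqrt b ^ 2 by
    rw [Real.sq_sqrt ha, Real.sq_sqrt hb]]
  have h1 := Real.sqrt_nonneg a
  have h2 := Real.sqrt_nonneg b
  have := Real.sqrt_le_sqrt (show Real.sqrt a ^ 2 + Real.sqrt b ^ 2 ≤
      (Real.sqrt a + Real.sqrt b) ^ 2 by nlinarith)
  rwa [Real.sqrt_sq (by positivity)] at this

lemma superadd_aux (x y q : ℝ) (hx : 0 ≤ x) (hy : 0 ≤ y) (hq : 1 ≤ q) :
    x ^ q + y ^ q ≤ (x + y) ^ q := by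
  lift x to NNReal using hx
  lift y to NNReal using hy
  have := NNReal.add_rpow_le_rpow_add x y hq
  exact_mod_cast this

/-- Key intermediate inequality in the proof of the converse subadditivity
inequality: for `x, y ≥ 0` and `1/4 ≤ p ≤ 1/2`,
`x^{2p} + y^{2p} ≤ (x+y)^{2p} + √2 · x^p y^p` (real powers). -/
theorem symmetric_converse_subadditivity
    (x y : ℝ) (hx : 0 ≤ x) (hy : 0 ≤ y) (p : ℝ) (hp1 : 1 / 4 ≤ p) (hp2 : p ≤ 1 / 2) :
    x ^ (2 * p) + y ^ (2 * p) ≤ (x + y) ^ (2 * p) + Real.sqrt 2 * (x ^ p * y ^ p) := by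
  have hxy : 0 ≤ x + y := by linarith
  have h4p : 1 ≤ 4 * p := by linarith
  have hsuper : x ^ (4 * p) + y ^ (4 * p) ≤ (x + y) ^ (4 * p) :=
    superadd_aux x y (4 * p) hx hy h4p
  -- (x^{2p} + y^{2p})^2 = x^{4p} + y^{4p} + 2 x^{2p} y^{2p}
  have hsq : (x ^ (2 * p) + y ^ (2 * p)) ^ 2
      = x ^ (4 * p) + y ^ (4 * p) + 2 * (x ^ (2 * p) * y ^ (2 * p)) := by
    have hx2 : x ^ (2 * p) * x ^ (2 * p) = x ^ (4 * p) := by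
      rw [← Real.rpow_add' hx (by linarith)]; ring_nf
    have hy2 : y ^ (2 * p) * y ^ (2 * p) = y ^ (4 * p) := by
      rw [← Real.rpow_add' hy (by linarith)]; ring_nf
    rw [add_sq, sq, sq, hx2, hy2]; ring
  have hA : (0:ℝ) ≤ (x + y) ^ (4 * p) := Real.rpow_nonneg hxy _
  have hB : (0:ℝ) ≤ 2 * (x ^ (2 * p) * y ^ (2 * p)) := by positivity
  have step1 : x ^ (2 * p) + y ^ (2 * p)
      ≤ Real.sqrt ((x + y) ^ (4 * p) + 2 * (x ^ (2 * p) * y ^ (2 * p))) := by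
    rw [show x ^ (2*p) + y ^ (2*p) =
        Real.sqrt ((x ^ (2*p) + y ^ (2*p)) ^ 2) by
      rw [Real.sqrt_sq (by positivity)]]
    apply Real.sqrt_le_sqrt
    rw [hsq]; linarith
  have step2 := sqrt_add_le_aux _ _ hA hB
  have e1 : Real.sqrt ((x + y) ^ (4 * p)) = (x + y) ^ (2 * p) := by
    rw [Real.sqrt_eq_rpow, ← Real.rpow_mul hxy]
    congr 1; ring
  have e2 : Real.sqrt (2 * (x ^ (2 * p) * y ^ (2 * p)))
      = Real.sqrt 2 * (x ^ p * y ^ p) := by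
    rw [Real.sqrt_mul (by norm_num)]
    congr 1
    rw [Real.sqrt_mul (Real.rpow_nonneg hx _), Real.sqrt_eq_rpow, Real.sqrt_eq_rpow,
      ← Real.rpow_mul hx, ← Real.rpow_mul hy]
    congr 2 <;> ring
  calc x ^ (2 * p) + y ^ (2 * p)
      ≤ Real.sqrt ((x + y) ^ (4 * p) + 2 * (x ^ (2 * p) * y ^ (2 * p))) := step1
    _ ≤ Real.sqrt ((x + y) ^ (4 * p)) + Real.sqrt (2 * (x ^ (2 * p) * y ^ (2 * p))) := step2
    _ = (x + y) ^ (2 * p) + Real.sqrt 2 * (x ^ p * y ^ p) := by rw [e1, e2]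
end

section
/- Let (a_n)_{n≥0} be a sequence of nonnegative real numbers, and let u > 1, C ≥ 0 and κ > 0 be real constants. Assume that a_{n+1} ≥ u·a_n − C·2^{−κn} for all n, and that limsup_{n→∞} 2^{κn/2}·a_n ≥ 1. Then limsup_{n→∞} a_n > 0. -/
/-- Abstract iteration argument: if a nonnegative sequence satisfies
`a_{n+1} ≥ u·a_n − C·2^{−κn}` with `u > 1`, `C ≥ 0`, `κ > 0`, and
`limsup 2^{κn/2}·a_n ≥ 1`, then `limsup a_n > 0`. -/
theorem limsup_pos_of_iteration
    (a : ℕ → ℝ) (ha : ∀ n, 0 ≤ a n) (u C κ : ℝ) (hu : 1 < u) (hC : 0 ≤ C) (hκ : 0 < κ)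
    (hrec : ∀ n : ℕ, u * a n - C * (2 : ℝ) ^ (-(κ * n)) ≤ a (n + 1))
    (hls : 1 ≤ Filter.limsup (fun n : ℕ => (((2 : ℝ) ^ (κ * n / 2) * a n : ℝ) : EReal))
        Filter.atTop) :
    0 < Filter.limsup (fun n : ℕ => ((a n : ℝ) : EReal)) Filter.atTop := by
  by_contra h
  push_neg at h
  have hu0 : (0:ℝ) < u := lt_trans one_pos hu
  have hu1 : (0:ℝ) < u - 1 := by linarith
  -- Step 1: the limsup hypothesis forces `a → 0`.
  have hliminf : (0:EReal) ≤ Filter.liminf (fun n : ℕ => ((a n : ℝ) : EReal)) Filter.atTop := by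
    refine Filter.le_liminf_of_le (by isBoundedDefault) ?_
    exact Filter.Eventually.of_forall (fun n => by exact_mod_cast ha n)
  have hle : Filter.liminf (fun n : ℕ => ((a n : ℝ) : EReal)) Filter.atTop ≤
      Filter.limsup (fun n : ℕ => ((a n : ℝ) : EReal)) Filter.atTop :=
    Filter.liminf_le_limsup
  have hsup0 : Filter.limsup (fun n : ℕ => ((a n : ℝ) : EReal)) Filter.atTop = 0 :=
    le_antisymm h (le_trans hliminf hle)
  have hinf0 : Filter.liminf (fun n : ℕ => ((a n : ℝ) : EReal)) Filter.atTop = 0 :=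
    le_antisymm (hsup0 ▸ hle) hliminf
  have htendE : Filter.Tendsto (fun n : ℕ => ((a n : ℝ) : EReal)) Filter.atTop (nhds (0:EReal)) :=
    tendsto_of_liminf_eq_limsup hinf0 hsup0
  have htend : Filter.Tendsto a Filter.atTop (nhds (0:ℝ)) := by
    have := htendE
    rw [show ((0:EReal)) = ((0:ℝ) : EReal) from rfl] at this
    exact EReal.tendsto_coe.mp this
  -- Step 2: iterate the recursion
  have key : ∀ m n : ℕ, a n ≤ a (n + m) / u ^ m + C * (2:ℝ) ^ (-(κ * n)) / (u - 1) := by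
    intro m
    induction m with
    | zero =>
      intro n
      have hp : (0:ℝ) < (2:ℝ) ^ (-(κ * n)) := Real.rpow_pos_of_pos (by norm_num : (0:ℝ) < 2) _
      have h0 : 0 ≤ C * (2:ℝ) ^ (-(κ * n)) / (u - 1) := by positivity
      simp only [Nat.add_zero, pow_zero, div_one]
      linarith
    | succ m ih =>
      intro n
      set p : ℝ := (2:ℝ) ^ (-(κ * n)) with hp_def
      set p' : ℝ := (2:ℝ) ^ (-(κ * (n + 1 : ℕ))) with hp'_def
      have hp : (0:ℝ) < p := Real.rpow_pos_of_pos (by norm_num : (0:ℝ) < 2) _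
      have hpp : p' ≤ p := by
        apply Real.rpow_le_rpow_of_exponent_le one_le_two
        push_cast
        nlinarith
      have h2 := ih (n + 1)
      have hupow : (0:ℝ) < u ^ m := pow_pos hu0 m
      set B : ℝ := a (n + 1 + m) / u ^ m with hB_def
      set D : ℝ := C * p / (u - 1) with hD_def
      have hD0 : 0 ≤ D := by positivity
      have hcp : C * p' / (u - 1) ≤ D := by
        rw [hD_def]
        gcongr
      have e1 : u * a n ≤ a (n + 1) + C * p := by linarith [hrec n]
      have e2 : u * a n ≤ B + D + C * p := by
        calc u * a n ≤ a (n + 1) + C * p := e1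
          _ ≤ (B + C * p' / (u - 1)) + C * p := by linarith
          _ ≤ B + D + C * p := by linarith
      have hidx : n + (m + 1) = n + 1 + m := by omega
      rw [hidx]
      have hfin : u * a n ≤ u * (a (n + 1 + m) / u ^ (m + 1) + D) := by
        have heq : u * (a (n + 1 + m) / u ^ (m + 1) + D) = B + u * D := by
          rw [hB_def, pow_succ]
          field_simp
        rw [heq]
        have : D + C * p = u * D := by
          rw [hD_def]
          field_simp
          ring
        linarith
      exact le_of_mul_le_mul_left hfin hu0
  -- Step 3: take the limit m → ∞ to get a pointwise bound on `a n`.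
  have bound : ∀ n : ℕ, a n ≤ C * (2:ℝ) ^ (-(κ * n)) / (u - 1) := by
    intro n
    have hcomp : Filter.Tendsto (fun m : ℕ => n + m) Filter.atTop Filter.atTop :=
      Filter.tendsto_atTop_mono (fun m => Nat.le_add_left m n) Filter.tendsto_id
    have h1 : Filter.Tendsto (fun m : ℕ => a (n + m)) Filter.atTop (nhds 0) :=
      htend.comp hcomp
    have h2 : Filter.Tendsto (fun m : ℕ => a (n + m) / u ^ m) Filter.atTop (nhds 0) := by
      apply squeeze_zero (fun m => div_nonneg (ha _) (le_of_lt (pow_pos hu0 m))) (fun m => ?_) h1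
      have hup : (1:ℝ) ≤ u ^ m := one_le_pow₀ (le_of_lt hu)
      rw [div_le_iff₀ (lt_of_lt_of_le one_pos hup)]
      nlinarith [ha (n + m)]
    have h3 : Filter.Tendsto (fun m : ℕ => a (n + m) / u ^ m + C * (2:ℝ) ^ (-(κ * n)) / (u - 1))
        Filter.atTop (nhds (0 + C * (2:ℝ) ^ (-(κ * n)) / (u - 1))) :=
      h2.add_const _
    rw [zero_add] at h3
    exact ge_of_tendsto' h3 (fun m => key m n)
  -- Step 4: conclude that `2^{κn/2} a n → 0`, contradicting hls.
  set r : ℝ := (2:ℝ) ^ (-(κ / 2)) with hr_def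
  have hr0 : 0 ≤ r := le_of_lt (Real.rpow_pos_of_pos (by norm_num : (0:ℝ) < 2) _)
  have hr1 : r < 1 := Real.rpow_lt_one_of_one_lt_of_neg one_lt_two (by linarith)
  have gbound : ∀ n : ℕ, (2:ℝ) ^ (κ * n / 2) * a n ≤ (C / (u - 1)) * r ^ n := by
    intro n
    have h1 : (2:ℝ) ^ (κ * n / 2) * a n ≤
        (2:ℝ) ^ (κ * n / 2) * (C * (2:ℝ) ^ (-(κ * n)) / (u - 1)) := by
      apply mul_le_mul_of_nonneg_left (bound n)
      exact le_of_lt (Real.rpow_pos_of_pos (by norm_num : (0:ℝ) < 2) _)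
    have h2 : (2:ℝ) ^ (κ * n / 2) * (C * (2:ℝ) ^ (-(κ * n)) / (u - 1)) =
        (C / (u - 1)) * r ^ n := by
      have e1 : (2:ℝ) ^ (κ * n / 2) * (2:ℝ) ^ (-(κ * n)) = (2:ℝ) ^ (κ * n / 2 + -(κ * n)) :=
        (Real.rpow_add (by norm_num : (0:ℝ) < 2) _ _).symm
      have e2 : κ * n / 2 + -(κ * n) = (-(κ / 2)) * (n : ℝ) := by ring
      have e3 : (2:ℝ) ^ ((-(κ / 2)) * (n : ℝ)) = r ^ n := by
        rw [Real.rpow_mul (by norm_num : (0:ℝ) ≤ 2), Real.rpow_natCast]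
      calc (2:ℝ) ^ (κ * n / 2) * (C * (2:ℝ) ^ (-(κ * n)) / (u - 1))
          = (C / (u - 1)) * ((2:ℝ) ^ (κ * n / 2) * (2:ℝ) ^ (-(κ * n))) := by ring
        _ = (C / (u - 1)) * r ^ n := by rw [e1, e2, e3]
    linarith [h2 ▸ h1]
  have gtend : Filter.Tendsto (fun n : ℕ => (2:ℝ) ^ (κ * n / 2) * a n) Filter.atTop (nhds 0) := by
    apply squeeze_zero
      (fun n => mul_nonneg (le_of_lt (Real.rpow_pos_of_pos (by norm_num) _)) (ha n)) gbound
    have := (tendsto_pow_atTop_nhds_zero_of_lt_one hr0 hr1).const_mul (C / (u - 1))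
    simpa using this
  have gtendE : Filter.Tendsto (fun n : ℕ => (((2:ℝ) ^ (κ * n / 2) * a n : ℝ) : EReal))
      Filter.atTop (nhds (0:EReal)) := by
    rw [show ((0:EReal)) = ((0:ℝ) : EReal) from rfl]
    exact EReal.tendsto_coe.mpr gtend
  have := gtendE.limsup_eq
  rw [this] at hls
  exact absurd hls (by norm_num)
end

section
/- Let (a_n)_{n≥0} be a sequence of nonnegative real numbers and let κ > 0 and α > 0 be real constants. Assume that there exists N such that a_{n+1} ≥ (1 − 2^{−αn})·a_n − 2^{−2κn/3} for all n ≥ N, and that limsup_{n→∞} 2^{κn/2}·a_n ≥ 1. Then limsup_{n→∞} a_n > 0. -/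
open Filter

private lemma rpow_neg_mul_nat' (c : ℝ) (n : ℕ) :
    (2 : ℝ) ^ (-(c * n)) = ((2 : ℝ) ^ (-c)) ^ n := by
  rw [← Real.rpow_natCast ((2:ℝ) ^ (-c)) n, ← Real.rpow_mul (by norm_num), neg_mul]

private lemma tendsto_rpow_neg_mul (c : ℝ) (hc : 0 < c) :
    Tendsto (fun n : ℕ => (2 : ℝ) ^ (-(c * n))) atTop (nhds 0) := by
  simp only [rpow_neg_mul_nat']
  exact tendsto_pow_atTop_nhds_zero_of_lt_one
    (Real.rpow_pos_of_pos (by norm_num) _).le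
    (Real.rpow_lt_one_of_one_lt_of_neg (by norm_num) (by linarith))

/-- Abstract induction argument at the critical threshold: if a nonnegative
sequence satisfies, eventually, `a_{n+1} ≥ (1 − 2^{−αn})·a_n − 2^{−2κn/3}` with
`α, κ > 0`, and `limsup 2^{κn/2}·a_n ≥ 1`, then `limsup a_n > 0`. -/
theorem limsup_pos_of_critical_iteration
    (a : ℕ → ℝ) (ha : ∀ n, 0 ≤ a n) (κ α : ℝ) (hκ : 0 < κ) (hα : 0 < α)
    (hrec : ∃ N : ℕ, ∀ n : ℕ, N ≤ n →
      (1 - (2 : ℝ) ^ (-(α * n))) * a n - (2 : ℝ) ^ (-(2 * κ * n / 3)) ≤ a (n + 1))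
    (hls : 1 ≤ Filter.limsup (fun n : ℕ => (((2 : ℝ) ^ (κ * n / 2) * a n : ℝ) : EReal))
        Filter.atTop) :
    0 < Filter.limsup (fun n : ℕ => ((a n : ℝ) : EReal)) Filter.atTop := by
  obtain ⟨N, hrec⟩ := hrec
  set q₁ : ℝ := (2 : ℝ) ^ (-α) with hq₁def
  set q₂ : ℝ := (2 : ℝ) ^ (-(2 * κ / 3)) with hq₂def
  have hq₁pos : 0 < q₁ := Real.rpow_pos_of_pos (by norm_num) _
  have hq₂pos : 0 < q₂ := Real.rpow_pos_of_pos (by norm_num) _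
  have hq₁lt : q₁ < 1 := Real.rpow_lt_one_of_one_lt_of_neg (by norm_num) (by linarith)
  have hq₂lt : q₂ < 1 := Real.rpow_lt_one_of_one_lt_of_neg (by norm_num) (by linarith)
  -- frequently, `1/2 ≤ 2^(κ n/2) * a n`
  have hfreq : ∃ᶠ n : ℕ in atTop, (1/2 : ℝ) ≤ (2 : ℝ) ^ (κ * (n:ℝ) / 2) * a n := by
    by_contra h
    rw [Filter.not_frequently] at h
    have hev : ∀ᶠ n : ℕ in atTop,
        (((2 : ℝ) ^ (κ * n / 2) * a n : ℝ) : EReal) ≤ (((1:ℝ)/2 : ℝ) : EReal) := by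
      filter_upwards [h] with n hn
      exact EReal.coe_le_coe_iff.mpr (le_of_not_ge hn)
    have hle := Filter.limsup_le_of_le (by isBoundedDefault) hev
    have : (1 : EReal) ≤ (((1:ℝ)/2 : ℝ) : EReal) := le_trans hls hle
    rw [show (1 : EReal) = ((1:ℝ) : EReal) by norm_cast, EReal.coe_le_coe_iff] at this
    linarith
  -- eventual smallness conditions
  have hev₁ : ∀ᶠ n : ℕ in atTop, (2 : ℝ) ^ (-(α * n)) ≤ (1 - q₁) / 4 :=
    ((tendsto_rpow_neg_mul α hα).eventually_lt_const (by linarith)).mono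
      fun n hn => hn.le
  have hev₂ : ∀ᶠ n : ℕ in atTop, (2 : ℝ) ^ (-(κ / 6 * n)) ≤ (1 - q₂) / 8 :=
    ((tendsto_rpow_neg_mul (κ/6) (by linarith)).eventually_lt_const
      (by linarith)).mono fun n hn => hn.le
  obtain ⟨n₀, ⟨hhalf, hC₁, hC₂⟩, hgeN⟩ :=
    ((hfreq.and_eventually (hev₁.and hev₂)).and_eventually
      (eventually_ge_atTop N)).exists
  set c₀ : ℝ := (1/2) * (2 : ℝ) ^ (-(κ * n₀ / 2)) with hc₀def
  have hc₀pos : 0 < c₀ := by positivity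
  -- base : a n₀ ≥ c₀
  have hbase : c₀ ≤ a n₀ := by
    have hmul : (2 : ℝ) ^ (-(κ * n₀ / 2)) * (2 : ℝ) ^ (κ * n₀ / 2) = 1 := by
      rw [← Real.rpow_add (by norm_num)]; norm_num
    have hp : (0:ℝ) < (2 : ℝ) ^ (-(κ * n₀ / 2)) := Real.rpow_pos_of_pos (by norm_num) _
    nlinarith [mul_le_mul_of_nonneg_left hhalf hp.le]
  -- geometric tails
  obtain ⟨E₁, hE₁def⟩ : ∃ f : ℕ → ℝ,
      ∀ m : ℕ, f m = (2 : ℝ) ^ (-(α * ((n₀ : ℝ) + m))) / (1 - q₁) :=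
    ⟨_, fun _ => rfl⟩
  obtain ⟨E₂, hE₂def⟩ : ∃ f : ℕ → ℝ,
      ∀ m : ℕ, f m = (2 : ℝ) ^ (-(2 * κ * ((n₀ : ℝ) + m) / 3)) / (1 - q₂) :=
    ⟨_, fun _ => rfl⟩
  have hE₁pos : ∀ m, 0 < E₁ m := fun m => by
    rw [hE₁def]
    have := Real.rpow_pos_of_pos (show (0:ℝ) < 2 by norm_num) (-(α * ((n₀ : ℝ) + m)))
    exact div_pos this (by linarith)
  have hE₂pos : ∀ m, 0 < E₂ m := fun m => by
    rw [hE₂def]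
    have := Real.rpow_pos_of_pos (show (0:ℝ) < 2 by norm_num) (-(2 * κ * ((n₀ : ℝ) + m) / 3))
    exact div_pos this (by linarith)
  have hE₁mono : ∀ m, E₁ m ≤ E₁ 0 := by
    intro m
    rw [hE₁def, hE₁def]
    have : (2 : ℝ) ^ (-(α * ((n₀ : ℝ) + m))) ≤ (2 : ℝ) ^ (-(α * ((n₀ : ℝ) + (0:ℕ)))) := by
      apply Real.rpow_le_rpow_of_exponent_le (by norm_num)
      push_cast
      nlinarith [Nat.cast_nonneg (α := ℝ) m]
    exact div_le_div_of_nonneg_right this (by linarith) |>.trans_eq rfl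
  have hE₂mono : ∀ m, E₂ m ≤ E₂ 0 := by
    intro m
    rw [hE₂def, hE₂def]
    have : (2 : ℝ) ^ (-(2 * κ * ((n₀ : ℝ) + m) / 3)) ≤
        (2 : ℝ) ^ (-(2 * κ * ((n₀ : ℝ) + (0:ℕ)) / 3)) := by
      apply Real.rpow_le_rpow_of_exponent_le (by norm_num)
      push_cast
      nlinarith [Nat.cast_nonneg (α := ℝ) m]
    exact div_le_div_of_nonneg_right this (by linarith)
  have hE₁zero : E₁ 0 ≤ 1/4 := by
    rw [hE₁def]
    simp only [Nat.cast_zero, add_zero]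
    rw [div_le_iff₀ (by linarith)]
    calc (2 : ℝ) ^ (-(α * (n₀:ℝ))) ≤ (1 - q₁) / 4 := hC₁
      _ ≤ 1/4 * (1 - q₁) := by ring_nf; exact le_rfl
  have hE₂zero : E₂ 0 ≤ c₀ / 4 := by
    rw [hE₂def]
    simp only [Nat.cast_zero, add_zero]
    rw [div_le_iff₀ (by linarith)]
    have hsplit : (2 : ℝ) ^ (-(2 * κ * (n₀:ℝ) / 3)) =
        (2 : ℝ) ^ (-(κ * (n₀:ℝ) / 2)) * (2 : ℝ) ^ (-(κ / 6 * (n₀:ℝ))) := by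
      rw [← Real.rpow_add (by norm_num)]; ring_nf
    rw [hsplit]
    have hp : (0:ℝ) < (2 : ℝ) ^ (-(κ * (n₀:ℝ) / 2)) := Real.rpow_pos_of_pos (by norm_num) _
    have := mul_le_mul_of_nonneg_left hC₂ hp.le
    rw [hc₀def]
    nlinarith
  -- key induction
  have hL : ∀ m : ℕ, c₀ / 2 + c₀ * E₁ m + E₂ m ≤ a (n₀ + m) := by
    intro m
    induction m with
    | zero =>
      have h1 : c₀ * E₁ 0 ≤ c₀ * (1/4) := by nlinarith [hE₁pos 0]
      have h2 : c₀ / 2 + c₀ * E₁ 0 + E₂ 0 ≤ a n₀ := by linarith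
      simpa using h2
    | succ m ih =>
      have hcast : ((n₀ + m : ℕ) : ℝ) = (n₀ : ℝ) + m := by push_cast; ring
      obtain ⟨ε, hεdef⟩ : ∃ x : ℝ, x = (2 : ℝ) ^ (-(α * ((n₀ : ℝ) + m))) := ⟨_, rfl⟩
      obtain ⟨δ, hδdef⟩ : ∃ x : ℝ, x = (2 : ℝ) ^ (-(2 * κ * ((n₀ : ℝ) + m) / 3)) :=
        ⟨_, rfl⟩
      have hrecn : (1 - ε) * a (n₀ + m) - δ ≤ a (n₀ + m + 1) := by
        rw [hεdef, hδdef]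
        have h := hrec (n₀ + m) (le_trans hgeN (Nat.le_add_right _ _))
        rw [hcast] at h
        exact h
      have hεpos : 0 < ε := hεdef ▸ Real.rpow_pos_of_pos (by norm_num) _
      have hδpos : 0 < δ := hδdef ▸ Real.rpow_pos_of_pos (by norm_num) _
      have hεle1 : ε ≤ 1 := by
        rw [hεdef]
        exact Real.rpow_le_one_of_one_le_of_nonpos (by norm_num)
          (by rw [neg_nonpos]; positivity)
      -- deltas of the tails
      have hd₁ : E₁ m - E₁ (m+1) = ε := by
        have h2 : (2 : ℝ) ^ (-(α * ((n₀ : ℝ) + (m+1:ℕ)))) =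
            (2 : ℝ) ^ (-(α * ((n₀ : ℝ) + m))) * q₁ := by
          rw [hq₁def, ← Real.rpow_add (by norm_num)]
          push_cast; ring_nf
        have h3 : ε = (2 : ℝ) ^ (-(α * ((n₀ : ℝ) + m))) := hεdef
        have hne : (1:ℝ) - q₁ ≠ 0 := by linarith
        rw [hE₁def, hE₁def, h2, h3, div_sub_div_same, div_eq_iff hne]
        ring
      have hd₂ : E₂ m - E₂ (m+1) = δ := by
        have h2 : (2 : ℝ) ^ (-(2 * κ * ((n₀ : ℝ) + (m+1:ℕ)) / 3)) =
            (2 : ℝ) ^ (-(2 * κ * ((n₀ : ℝ) + m) / 3)) * q₂ := by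
          rw [hq₂def, ← Real.rpow_add (by norm_num)]
          push_cast; ring_nf
        have h3 : δ = (2 : ℝ) ^ (-(2 * κ * ((n₀ : ℝ) + m) / 3)) := hδdef
        have hne : (1:ℝ) - q₂ ≠ 0 := by linarith
        rw [hE₂def, hE₂def, h2, h3, div_sub_div_same, div_eq_iff hne]
        ring
      -- L m ≤ c₀
      have hLm_le : c₀ / 2 + c₀ * E₁ m + E₂ m ≤ c₀ := by
        have h1 : c₀ * E₁ m ≤ c₀ * (1/4) :=
          mul_le_mul_of_nonneg_left ((hE₁mono m).trans hE₁zero) hc₀pos.le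
        have h2 : E₂ m ≤ c₀ / 4 := (hE₂mono m).trans hE₂zero
        linarith
      have step : c₀ / 2 + c₀ * E₁ (m+1) + E₂ (m+1) ≤ (1 - ε) * a (n₀ + m) - δ := by
        have h1 : (1 - ε) * (c₀ / 2 + c₀ * E₁ m + E₂ m) ≤ (1 - ε) * a (n₀ + m) :=
          mul_le_mul_of_nonneg_left ih (by linarith)
        have h2 : ε * (c₀ / 2 + c₀ * E₁ m + E₂ m) ≤ ε * c₀ :=
          mul_le_mul_of_nonneg_left hLm_le hεpos.le
        have hexp : (1 - ε) * (c₀ / 2 + c₀ * E₁ m + E₂ m) =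
            (c₀ / 2 + c₀ * E₁ m + E₂ m) - ε * (c₀ / 2 + c₀ * E₁ m + E₂ m) := by
          ring
        have e0 : E₁ (m+1) = E₁ m - ε := by linarith only [hd₁]
        have e1 : c₀ * E₁ (m+1) = c₀ * E₁ m - c₀ * ε := by rw [e0]; ring
        have e2 : E₂ (m+1) = E₂ m - δ := by linarith only [hd₂]
        linarith only [h1, h2, hexp, e1, e2]
      exact le_trans step hrecn
  -- conclude
  have hev : ∀ᶠ n : ℕ in atTop, ((c₀/2 : ℝ) : EReal) ≤ ((a n : ℝ) : EReal) := by
    filter_upwards [eventually_ge_atTop n₀] with n hn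
    have h := hL (n - n₀)
    rw [Nat.add_sub_cancel' hn] at h
    have hp : 0 ≤ c₀ * E₁ (n - n₀) := mul_nonneg hc₀pos.le (hE₁pos (n - n₀)).le
    exact EReal.coe_le_coe_iff.mpr
      (by linarith only [h, hp, (hE₂pos (n - n₀)).le])
  have hle : ((c₀/2 : ℝ) : EReal) ≤
      Filter.limsup (fun n : ℕ => ((a n : ℝ) : EReal)) Filter.atTop :=
    Filter.le_limsup_of_frequently_le hev.frequently (by isBoundedDefault)
  calc (0 : EReal) < ((c₀/2 : ℝ) : EReal) := by
        exact_mod_cast EReal.coe_pos.mpr (by linarith)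
    _ ≤ _ := hle
end
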